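/- For the shifted orthonormal Chebyshev polynomials P_j on [0,1] with weight ω(c)=(π√(c(1−c)))^{-1} (so P₀=1 and P_j = √2 T_j(2c−1) for j ≥ 1), the fractional integral satisfies I^α P_j(c) = j√2 Σ_{i=0}^{j} (−1)^{j−i} ((j+i−1)! i!)/((j−i)! Γ(α+i+1) ∏_{k=1}^{2i}(k/2)) c^{i+α} for j ≥ 1, α > 0, c > 0. -/

import Mathlib

/-!
Expand `T_j(2c - 1) = (-1)^j T_j(1 - 2c)` in Taylor series about `1`: the `i`-th coefficient is
`(-1)^(j+i) 2^i T_j^(i)(1) / i!`, where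
`T_j^(i)(1) = ∏_{l<i} (j² - l²) / ∏_{l<i} (2l + 1)`. The fractional integral of `c^i` is the Beta
integral `i! c^(i+α) / Γ(α + i + 1)`, so the `i!` cancels, and the remaining products are the
factorials of the statement: `(j-i)! ∏_{l<i} (j² - l²) = j (j+i-1)!` and
`∏_{k=1}^{2i} k/2 = i! ∏_{l<i} (2l + 1) / 2^i`.
-/

noncomputable def Ialpha (α : ℝ) (g : ℝ → ℝ) (t : ℝ) : ℝ :=
  (1 / Real.Gamma α) * ∫ x in (0:ℝ)..t, (t - x) ^ (α - 1) * g x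

noncomputable def chebP (j : ℕ) (c : ℝ) : ℝ :=
  Real.sqrt 2 * (Polynomial.Chebyshev.T ℝ (j : ℤ)).eval (2 * c - 1)

open Polynomial Finset Nat

theorem Polynomial.eval_add_eq_sum_range_iterate_derivative {𝔽 : Type*} [Field 𝔽] [CharZero 𝔽]
    (p : 𝔽[X]) (r x : 𝔽) :
    p.eval (r + x) = ∑ k ∈ range (p.natDegree + 1), (derivative^[k] p).eval r / k ! * x ^ k := by
  rw [add_comm, ← taylor_eval, eval_eq_sum_range, natDegree_taylor]
  refine sum_congr rfl fun k _ => ?_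
  rw [taylor_coeff, ← congrFun (factorial_smul_hasseDeriv k) p, LinearMap.smul_apply, eval_smul,
    nsmul_eq_mul, mul_div_cancel_left₀ _ (by exact_mod_cast k.factorial_ne_zero)]

theorem Polynomial.Chebyshev.T_eval_two_mul_sub_one {𝔽 : Type*} [Field 𝔽] [CharZero 𝔽]
    (n : ℕ) (x : 𝔽) :
    (T 𝔽 n).eval (2 * x - 1) = ∑ k ∈ range (n + 1),
      (-1) ^ (n + k) * 2 ^ k * (derivative^[k] (T 𝔽 n)).eval 1 / k ! * x ^ k := by
  rw [show 2 * x - 1 = -(1 + -(2 * x)) by ring, T_eval_neg, eval_add_eq_sum_range_iterate_derivative,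
    natDegree_T, Int.natAbs_natCast, Int.cast_negOnePow_natCast, mul_sum]
  refine sum_congr rfl fun k _ => ?_
  rw [neg_pow (2 * x), pow_add]
  ring

theorem prod_Icc_div_two (i : ℕ) :
    ∏ k ∈ Icc 1 (2 * i), ((k : ℝ) / 2) = i ! * (∏ l ∈ range i, (2 * (l : ℝ) + 1)) / 2 ^ i := by
  induction i with
  | zero => simp
  | succ i ih =>
    rw [show 2 * (i + 1) = 2 * i + 1 + 1 by ring, prod_Icc_succ_top (by omega),
      prod_Icc_succ_top (by omega), ih, prod_range_succ, factorial_succ, pow_succ]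
    generalize ∏ l ∈ range i, (2 * (l : ℝ) + 1) = Q
    push_cast
    field_simp
    ring

theorem factorial_mul_prod_range_sq_sub_sq {i j : ℕ} (hj : 1 ≤ j) (hij : i ≤ j) :
    ((j - i)! : ℝ) * ∏ l ∈ range i, ((j : ℝ) ^ 2 - l ^ 2) = j * (j + i - 1)! := by
  induction i with
  | zero =>
    obtain ⟨m, rfl⟩ : ∃ m, j = m + 1 := ⟨j - 1, by omega⟩
    simp [factorial_succ]
  | succ i ih =>
    obtain ⟨m, hm⟩ : ∃ m, j - i = m + 1 := ⟨j - i - 1, by omega⟩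
    have hji : (m : ℝ) + 1 = j - i := by
      rw [← Nat.cast_sub (by omega : i ≤ j), hm]; push_cast; ring
    rw [show j - (i + 1) = m by omega, show j + (i + 1) - 1 = (j + i - 1) + 1 by omega,
      factorial_succ, prod_range_succ, Nat.cast_mul, Nat.cast_succ, Nat.cast_sub (by omega)]
    rw [hm, factorial_succ] at ih
    push_cast at ih ⊢
    linear_combination (j + i : ℝ) * ih (by omega)
      - (m ! : ℝ) * (∏ l ∈ range i, ((j : ℝ) ^ 2 - l ^ 2)) * (j + i) * hji

theorem integral_one_sub_rpow_mul_pow {α : ℝ} (hα : 0 < α) (i : ℕ) :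
    ∫ u in (0:ℝ)..1, (1 - u) ^ (α - 1) * u ^ i
      = Real.Gamma α * i ! / Real.Gamma (α + i + 1) := by
  have hre : ((∫ u in (0:ℝ)..1, (1 - u) ^ (α - 1) * u ^ i : ℝ) : ℂ)
      = Complex.betaIntegral (i + 1) α := by
    rw [← intervalIntegral.integral_ofReal, Complex.betaIntegral]
    refine intervalIntegral.integral_congr fun u hu => ?_
    rw [Set.uIcc_of_le zero_le_one, Set.mem_Icc] at hu
    rw [add_sub_cancel_right, Complex.cpow_natCast, Complex.ofReal_mul,
      Complex.ofReal_cpow (by linarith [hu.2] : (0:ℝ) ≤ 1 - u)]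
    push_cast
    ring
  have hbeta := Complex.Gamma_mul_Gamma_eq_betaIntegral (s := i + 1) (t := α)
    (by simp; positivity) (by simpa using hα)
  rw [show ((i : ℂ) + 1 + α) = ((α + i + 1 : ℝ) : ℂ) by push_cast; ring, Complex.Gamma_ofReal,
    Complex.Gamma_ofReal, Complex.Gamma_nat_eq_factorial, ← hre] at hbeta
  have hΓ : Real.Gamma (α + i + 1) ≠ 0 := (Real.Gamma_pos_of_pos (by positivity)).ne'
  have h : Real.Gamma (α + i + 1) * (∫ u in (0:ℝ)..1, (1 - u) ^ (α - 1) * u ^ i)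
      = i ! * Real.Gamma α := by exact_mod_cast hbeta.symm
  rw [eq_div_iff hΓ]
  linear_combination h

theorem integral_sub_rpow_mul_pow {α c : ℝ} (hα : 0 < α) (hc : 0 < c) (i : ℕ) :
    ∫ x in (0:ℝ)..c, (c - x) ^ (α - 1) * x ^ i
      = Real.Gamma α * i ! / Real.Gamma (α + i + 1) * c ^ ((i : ℝ) + α) := by
  have hscale : ∫ x in (0:ℝ)..c, (c - x) ^ (α - 1) * x ^ i
      = c * ∫ u in (0:ℝ)..1, c ^ (α - 1) * c ^ i * ((1 - u) ^ (α - 1) * u ^ i) := by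
    have h := intervalIntegral.smul_integral_comp_mul_left (a := 0) (b := 1)
      (fun x => (c - x) ^ (α - 1) * x ^ i) c
    rw [mul_zero, mul_one, smul_eq_mul] at h
    rw [← h]
    congr 1
    refine intervalIntegral.integral_congr fun u hu => ?_
    rw [Set.uIcc_of_le zero_le_one, Set.mem_Icc] at hu
    rw [show c - c * u = c * (1 - u) by ring, Real.mul_rpow hc.le (by linarith [hu.2]), mul_pow]
    ring
  rw [hscale, intervalIntegral.integral_const_mul, integral_one_sub_rpow_mul_pow hα,
    Real.rpow_add hc, Real.rpow_natCast, Real.rpow_sub_one hc.ne']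
  field_simp

theorem intervalIntegrable_sub_rpow_mul_pow {α : ℝ} (hα : 0 < α) (c : ℝ) (i : ℕ) :
    IntervalIntegrable (fun x => (c - x) ^ (α - 1) * x ^ i) MeasureTheory.volume 0 c := by
  have h := (intervalIntegral.intervalIntegrable_rpow' (a := 0) (b := c) (r := α - 1)
    (by linarith)).comp_sub_left c
  rw [sub_zero, sub_self] at h
  exact h.symm.mul_continuousOn (by fun_prop)

theorem Ialpha_sum_mul_pow {α c : ℝ} (hα : 0 < α) (hc : 0 < c) (s : Finset ℕ) (a : ℕ → ℝ) :
    Ialpha α (fun x => ∑ i ∈ s, a i * x ^ i) c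
      = ∑ i ∈ s, a i * i ! / Real.Gamma (α + i + 1) * c ^ ((i : ℝ) + α) := by
  have hΓ : Real.Gamma α ≠ 0 := (Real.Gamma_pos_of_pos hα).ne'
  have hlin : (fun x => (c - x) ^ (α - 1) * ∑ i ∈ s, a i * x ^ i)
      = fun x => ∑ i ∈ s, a i * ((c - x) ^ (α - 1) * x ^ i) := by
    ext x
    rw [mul_sum]
    exact sum_congr rfl fun i _ => by ring
  rw [Ialpha, hlin, intervalIntegral.integral_finsetSum fun i _ =>
      (intervalIntegrable_sub_rpow_mul_pow hα c i).const_mul (a i), mul_sum]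
  refine sum_congr rfl fun i _ => ?_
  rw [intervalIntegral.integral_const_mul, integral_sub_rpow_mul_pow hα hc]
  field_simp

theorem stmt_17 (α : ℝ) (hα : 0 < α) (j : ℕ) (hj : 1 ≤ j) (c : ℝ) (hc : 0 < c) :
    Ialpha α (chebP j) c =
      (j : ℝ) * Real.sqrt 2 *
        ∑ i ∈ Finset.range (j + 1),
          (-1 : ℝ) ^ (j - i) *
            (((Nat.factorial (j + i - 1) : ℝ) * (Nat.factorial i : ℝ)) /
              ((Nat.factorial (j - i) : ℝ) * Real.Gamma (α + i + 1) *
                ∏ k ∈ Finset.Icc 1 (2 * i), ((k : ℝ) / 2))) *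
            c ^ ((i : ℝ) + α) := by
  have hcheb : chebP j = fun x => ∑ i ∈ range (j + 1), Real.sqrt 2 *
      ((-1) ^ (j + i) * 2 ^ i * (derivative^[i] (Chebyshev.T ℝ j)).eval 1 / i !) * x ^ i := by
    ext x
    rw [chebP, Chebyshev.T_eval_two_mul_sub_one, mul_sum]
    exact sum_congr rfl fun i _ => by ring
  rw [hcheb, Ialpha_sum_mul_pow hα hc, mul_sum]
  refine sum_congr rfl fun i hi => ?_
  have hij : i ≤ j := mem_range_succ_iff.mp hi
  have hprod := factorial_mul_prod_range_sq_sub_sq hj hij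
  have hsign : (-1 : ℝ) ^ (j + i) = (-1) ^ (j - i) := by
    rw [show j + i = j - i + 2 * i by omega, pow_add, pow_mul, neg_one_sq, one_pow, mul_one]
  rw [Chebyshev.iterate_derivative_T_eval_one_eq_div, prod_Icc_div_two, hsign]
  push_cast
  have hΓ := (Real.Gamma_pos_of_pos (by positivity : 0 < α + i + 1)).ne'
  field_simp
  linear_combination hprod
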